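/- For every real number i, the square of the Euclidean inner product of adjacent layer-norm hashes satisfies (φ(i, 1) · φ(i − 1, 1))² = 1 − 1/(i⁴ − 2i³ + 3i² − 2i + 2), where the denominator i⁴ − 2i³ + 3i² − 2i + 2 = (i(i−1) + 1)² + 1 is always positive. -/

import Mathlib

open scoped RealInnerProductSpace

/-- Layer norm: subtract the mean, then normalize to unit Euclidean norm. -/
noncomputable def layerNorm {ι : Type*} [Fintype ι] (v : EuclideanSpace ℝ ι) :
    EuclideanSpace ℝ ι :=
  let c : EuclideanSpace ℝ ι := WithLp.toLp 2 (fun j => v j - (∑ l, v l) / (Fintype.card ι))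
  ‖c‖⁻¹ • c

/-- The layer-norm hash φ(x, y) = layer_norm(⟨x, y, −x, −y⟩) ∈ ℝ⁴. -/
noncomputable def lnHash (x y : ℝ) : EuclideanSpace ℝ (Fin 4) :=
  layerNorm (WithLp.toLp 2 ![x, y, -x, -y] : EuclideanSpace ℝ (Fin 4))

/-
The vector ⟨x, y, −x, −y⟩ already has mean zero, so φ(x, y) is just its normalization, and
⟪φ(x, y), φ(x', y')⟫² = (xx' + yy')² / ((x² + y²)(x'² + y'²)). For (x, y, x', y') = (i, 1, i − 1, 1)
the denominator (i² + 1)((i − 1)² + 1) is D = i⁴ − 2i³ + 3i² − 2i + 2 and the numerator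
(i(i − 1) + 1)² is D − 1.
-/

theorem layerNorm_of_sum_eq_zero {ι : Type*} [Fintype ι] (v : EuclideanSpace ℝ ι)
    (hv : ∑ l, v l = 0) : layerNorm v = ‖v‖⁻¹ • v := by
  simp [layerNorm, hv]

theorem real_inner_inv_norm_smul_sq {E : Type*} [NormedAddCommGroup E] [InnerProductSpace ℝ E]
    (u v : E) : ⟪‖u‖⁻¹ • u, ‖v‖⁻¹ • v⟫ ^ 2 = ⟪u, v⟫ ^ 2 / (‖u‖ ^ 2 * ‖v‖ ^ 2) := by
  rw [real_inner_smul_left, real_inner_smul_right]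
  field_simp

theorem lnHash_eq (x y : ℝ) :
    lnHash x y = ‖(WithLp.toLp 2 ![x, y, -x, -y] : EuclideanSpace ℝ (Fin 4))‖⁻¹ •
      (WithLp.toLp 2 ![x, y, -x, -y] : EuclideanSpace ℝ (Fin 4)) :=
  layerNorm_of_sum_eq_zero _ (by simp [Fin.sum_univ_four])

theorem inner_hashVector (x y x' y' : ℝ) :
    ⟪(WithLp.toLp 2 ![x, y, -x, -y] : EuclideanSpace ℝ (Fin 4)),
      WithLp.toLp 2 ![x', y', -x', -y']⟫ = 2 * (x * x' + y * y') := by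
  simp only [PiLp.inner_apply, RCLike.inner_apply, Real.ringHom_apply, Fin.sum_univ_four,
    Fin.isValue, Matrix.cons_val_zero, Matrix.cons_val_one, Matrix.cons_val, mul_neg, neg_mul,
    neg_neg]
  ring

theorem norm_hashVector_sq (x y : ℝ) :
    ‖(WithLp.toLp 2 ![x, y, -x, -y] : EuclideanSpace ℝ (Fin 4))‖ ^ 2 = 2 * (x ^ 2 + y ^ 2) := by
  rw [← real_inner_self_eq_norm_sq, inner_hashVector]
  ring

theorem inner_lnHash_sq (x y x' y' : ℝ) :
    ⟪lnHash x y, lnHash x' y'⟫ ^ 2 =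
      (x * x' + y * y') ^ 2 / ((x ^ 2 + y ^ 2) * (x' ^ 2 + y' ^ 2)) := by
  rw [lnHash_eq, lnHash_eq, real_inner_inv_norm_smul_sq, inner_hashVector, norm_hashVector_sq,
    norm_hashVector_sq, mul_pow, mul_mul_mul_comm]
  norm_num [mul_div_mul_left]

/-- (φ(i,1) · φ(i−1,1))² = 1 − 1/(i⁴ − 2i³ + 3i² − 2i + 2), with the denominator
equal to (i(i−1) + 1)² + 1 and always positive. -/
theorem lnHash_adjacent_inner_sq (i : ℝ) :
    ⟪lnHash i 1, lnHash (i - 1) 1⟫ ^ 2 =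
        1 - 1 / (i ^ 4 - 2 * i ^ 3 + 3 * i ^ 2 - 2 * i + 2) ∧
      i ^ 4 - 2 * i ^ 3 + 3 * i ^ 2 - 2 * i + 2 = (i * (i - 1) + 1) ^ 2 + 1 ∧
      0 < i ^ 4 - 2 * i ^ 3 + 3 * i ^ 2 - 2 * i + 2 := by
  have hD : i ^ 4 - 2 * i ^ 3 + 3 * i ^ 2 - 2 * i + 2 = (i * (i - 1) + 1) ^ 2 + 1 := by ring
  have hpos : 0 < i ^ 4 - 2 * i ^ 3 + 3 * i ^ 2 - 2 * i + 2 := by rw [hD]; positivity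
  refine ⟨?_, hD, hpos⟩
  have hprod :
      (i ^ 2 + 1 ^ 2) * ((i - 1) ^ 2 + 1 ^ 2) = i ^ 4 - 2 * i ^ 3 + 3 * i ^ 2 - 2 * i + 2 := by
    ring
  rw [inner_lnHash_sq, hprod, eq_sub_iff_add_eq, ← add_div, div_eq_one_iff_eq hpos.ne']
  ring
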